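/- arXiv:1405.5580 — 2 statements merged into one kernel-verified Lean document; each statement's English description precedes it below -/
import Mathlib

section
/- Let a > 0, b > 0, c > 0, and define Q(u) = −(1/b)·log a − (1/(bc))·log u + (1/b)·log(1 − u^{1/c}) for u ∈ (0,1) (the quantile function G^{-1}(1−u) = log F^{-1}(1−u) of the log Singh-Maddala distribution, where F(y) = 1 − (1 + a y^b)^{−c}). Then for every x > 0: lim_{u→0⁺} u^{−1/c}·( bc·(Q(ux) − Q(u)) + log x ) = −c·(x^{1/c} − 1) (the expression being taken for u small enough that ux ∈ (0,1)). -/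
/-!
Writing `v = u^{1/c}`, the constant and the `log u` terms of `Q` cancel against `log x` in
`bc (Q(ux) - Q(u)) + log x`, leaving `c (log (1 - x^{1/c} v) - log (1 - v))`. Since
`log (1 - s) = -s + o(s)` as `s → 0⁺`, dividing by `v` gives the limit `-c (x^{1/c} - 1)`.
-/

open Filter Topology Set

lemma Real.tendsto_log_one_sub_div_nhdsNE :
    Tendsto (fun s : ℝ => Real.log (1 - s) / s) (𝓝[≠] 0) (𝓝 (-1)) := by
  have hderiv : HasDerivAt (fun s : ℝ => Real.log (1 - s)) (-1) 0 := by
    simpa using ((hasDerivAt_id (0 : ℝ)).const_sub 1).log (by norm_num)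
  refine (hasDerivAt_iff_tendsto_slope_zero.mp hderiv).congr fun s => ?_
  simp [div_eq_inv_mul]

lemma Real.tendsto_rpow_nhdsGT_zero {p : ℝ} (hp : 0 < p) :
    Tendsto (fun u : ℝ => u ^ p) (𝓝[>] 0) (𝓝[>] 0) := by
  refine tendsto_nhdsWithin_of_tendsto_nhds_of_eventually_within _ ?_ ?_
  · simpa [Real.zero_rpow hp.ne'] using
      (Real.continuousAt_rpow_const 0 p (Or.inr hp.le)).tendsto.mono_left nhdsWithin_le_nhds
  · filter_upwards [self_mem_nhdsWithin] with u hu using Real.rpow_pos_of_pos hu p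

lemma tendsto_rpow_neg_mul_sub_of_tendsto_div {g : ℝ → ℝ} {L p x : ℝ} (hp : 0 < p) (hx : 0 < x)
    (hg : Tendsto (fun s => g s / s) (𝓝[>] 0) (𝓝 L)) :
    Tendsto (fun u : ℝ => u ^ (-p) * (g ((u * x) ^ p) - g (u ^ p))) (𝓝[>] 0)
      (𝓝 (L * (x ^ p - 1))) := by
  have hscale := Real.tendsto_rpow_nhdsGT_zero hp
  have hmul : Tendsto (fun u : ℝ => u * x) (𝓝[>] 0) (𝓝[>] 0) := by
    simpa using Filter.TendstoNhdsWithinIoi.mul_const hx (tendsto_id (x := 𝓝[>] (0 : ℝ)))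
  have hlim := ((hg.comp (hscale.comp hmul)).mul_const (x ^ p)).sub (hg.comp hscale)
  rw [show L * (x ^ p - 1) = L * x ^ p - L by ring]
  refine hlim.congr' ?_
  filter_upwards [self_mem_nhdsWithin] with u (hu : 0 < u)
  simp only [Function.comp_apply, Real.mul_rpow hu.le hx.le, Real.rpow_neg hu.le]
  field_simp

theorem log_singh_maddala_second_order_general
    (a b c : ℝ) (hb : 0 < b) (hc : 0 < c)
    (Q : ℝ → ℝ)
    (hQ : ∀ u ∈ Set.Ioo (0:ℝ) 1,
      Q u = -(1 / b) * Real.log a - (1 / (b * c)) * Real.log u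
            + (1 / b) * Real.log (1 - u ^ (1 / c)))
    (x : ℝ) (hx : 0 < x) :
    Tendsto (fun u => u ^ (-(1 / c)) * (b * c * (Q (u * x) - Q u) + Real.log x))
      (𝓝[>] 0) (𝓝 (-c * (x ^ (1 / c) - 1))) := by
  have hlim := (tendsto_rpow_neg_mul_sub_of_tendsto_div (one_div_pos.2 hc) hx
    (Real.tendsto_log_one_sub_div_nhdsNE.mono_left (nhdsGT_le_nhdsNE 0))).const_mul c
  rw [show -c * (x ^ (1 / c) - 1) = c * (-1 * (x ^ (1 / c) - 1)) by ring]
  refine hlim.congr' ?_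
  filter_upwards [Ioo_mem_nhdsGT (lt_min one_pos (inv_pos.2 hx))] with u ⟨hu0, hu⟩
  have hu1 : u < 1 := hu.trans_le (min_le_left _ _)
  have hux1 : u * x < 1 := (lt_inv_mul_iff₀' hx).mp (by simpa using hu.trans_le (min_le_right _ _))
  rw [hQ u ⟨hu0, hu1⟩, hQ (u * x) ⟨mul_pos hu0 hx, hux1⟩, Real.log_mul hu0.ne' hx.ne']
  field_simp
  ring

/-- Second order condition for the log Singh-Maddala distribution quantile function. -/
theorem log_singh_maddala_second_order
    (a b c : ℝ) (ha : 0 < a) (hb : 0 < b) (hc : 0 < c)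
    (Q : ℝ → ℝ)
    (hQ : ∀ u ∈ Set.Ioo (0:ℝ) 1,
      Q u = -(1 / b) * Real.log a - (1 / (b * c)) * Real.log u
            + (1 / b) * Real.log (1 - u ^ (1 / c)))
    (x : ℝ) (hx : 0 < x) :
    Tendsto (fun u => u ^ (-(1 / c)) * (b * c * (Q (u * x) - Q u) + Real.log x))
      (𝓝[>] 0) (𝓝 (-c * (x ^ (1 / c) - 1))) :=
  log_singh_maddala_second_order_general a b c hb hc Q hQ x hx
end

section
/- Let Φ(y) = (2π)^{−1/2} ∫_{−∞}^{y} e^{−t²/2} dt be the standard normal distribution function, and let q : (0,1) → ℝ be any function satisfying Φ(q(s)) = 1 − s for all s ∈ (0,1). Then for every x > 0: lim_{s→0⁺} (2 log(1/s))^{1/2}·( q(s) − q(xs) ) = log x (the expression being taken for s small enough that xs ∈ (0,1)). -/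
/-!
Mills' ratio `y e^{y²/2} ∫_y^∞ e^{-t²/2} dt → 1`, obtained by squeezing the tail integral
between `e^{-y²/2} y / (y² + 1)` and `e^{-y²/2} / y`, turns `Φ (q s) = 1 - s` into
`q(s)²/2 + log q(s) = log (1/s) - log √(2π) + o(1)`. Comparing this with the same identity
at `x s` gives `q(s)² - q(xs)² → 2 log x`, and dividing by `q(s) + q(xs) ∼ 2 √(2 log (1/s))`
gives the limit.
-/

open Filter Topology Set Real MeasureTheory

section Asymptotics

variable {α : Type*} {l : Filter α} {a b L : α → ℝ} {κ κ' : ℝ}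

theorem tendsto_log_div_sq_atTop : Tendsto (fun y : ℝ => log y / y ^ 2) atTop (𝓝 0) := by
  have h := isLittleO_log_id_atTop.tendsto_div_nhds_zero.mul tendsto_inv_atTop_zero
  rw [mul_zero] at h
  refine h.congr' ?_
  filter_upwards with y
  simp only [id, sq, mul_inv, div_eq_mul_inv, mul_assoc]

theorem tendsto_sqrt_two_mul_div_of_tendsto_sub (ha : Tendsto a l atTop)
    (hA : Tendsto (fun i => a i ^ 2 / 2 + log (a i) - L i) l (𝓝 κ)) :
    Tendsto (fun i => √(2 * L i) / a i) l (𝓝 1) := by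
  have hsq : Tendsto (fun i => 2 * L i / a i ^ 2) l (𝓝 1) := by
    have hinv : Tendsto (fun i => (a i ^ 2)⁻¹) l (𝓝 0) :=
      tendsto_inv_atTop_zero.comp ((tendsto_pow_atTop two_ne_zero).comp ha)
    have h := (tendsto_const_nhds (x := (1 : ℝ))).add
      (((tendsto_log_div_sq_atTop.comp ha).const_mul 2).sub ((hA.mul hinv).const_mul 2))
    simp only [mul_zero, sub_zero, add_zero] at h
    refine h.congr' ?_
    filter_upwards [ha.eventually_gt_atTop 0] with i hi
    simp only [Function.comp]
    field_simp
    ring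
  have h := (continuous_sqrt.tendsto 1).comp hsq
  rw [sqrt_one] at h
  refine h.congr' ?_
  filter_upwards [ha.eventually_ge_atTop 0] with i hi
  simp only [Function.comp, sqrt_div' _ (sq_nonneg _), sqrt_sq hi]

theorem tendsto_sqrt_two_mul_mul_sub_of_tendsto_sub (ha : Tendsto a l atTop)
    (hb : Tendsto b l atTop)
    (hA : Tendsto (fun i => a i ^ 2 / 2 + log (a i) - L i) l (𝓝 κ))
    (hB : Tendsto (fun i => b i ^ 2 / 2 + log (b i) - L i) l (𝓝 κ')) :
    Tendsto (fun i => √(2 * L i) * (a i - b i)) l (𝓝 (κ - κ')) := by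
  set r := fun i => √(2 * L i)
  have hu : Tendsto (fun i => r i / a i) l (𝓝 1) := tendsto_sqrt_two_mul_div_of_tendsto_sub ha hA
  have hv : Tendsto (fun i => r i / b i) l (𝓝 1) := tendsto_sqrt_two_mul_div_of_tendsto_sub hb hB
  have hpos : ∀ᶠ i in l, 0 < a i ∧ 0 < b i ∧ 0 < r i := by
    filter_upwards [ha.eventually_gt_atTop 0, hb.eventually_gt_atTop 0,
      hu.eventually (lt_mem_nhds one_pos)] with i ha hb hu
    exact ⟨ha, hb, (div_pos_iff_of_pos_right ha).1 hu⟩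
  have hlog : Tendsto (fun i => log (a i) - log (b i)) l (𝓝 0) := by
    have hvu := hv.div hu one_ne_zero
    rw [div_one] at hvu
    have h := (continuousAt_log one_ne_zero).tendsto.comp hvu
    rw [log_one] at h
    refine h.congr' ?_
    filter_upwards [hpos] with i ⟨ha, hb, hr⟩
    rw [Function.comp_apply, Pi.div_apply, ← log_div ha.ne' hb.ne']
    congr 1
    field_simp
  have hdiff : Tendsto (fun i => a i ^ 2 - b i ^ 2) l (𝓝 (2 * (κ - κ'))) := by
    have h := ((hA.sub hB).sub hlog).const_mul 2
    rw [sub_zero] at h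
    refine h.congr' (Eventually.of_forall fun i => ?_)
    ring
  have hhalf : Tendsto (fun i => r i / (a i + b i)) l (𝓝 (1 / 2)) := by
    have h := (hu.mul hv).div (hu.add hv) (by norm_num)
    norm_num at h
    refine h.congr' ?_
    filter_upwards [hpos] with i ⟨ha, hb, hr⟩
    simp only [Pi.div_apply]
    field_simp
    ring
  have h := hdiff.mul hhalf
  rw [show 2 * (κ - κ') * (1 / 2) = κ - κ' by ring] at h
  refine h.congr' ?_
  filter_upwards [hpos] with i ⟨ha, hb, hr⟩
  field_simp
  ring

end Asymptotics

noncomputable def gaussianTail (y : ℝ) : ℝ := ∫ t in Ioi y, exp (-t ^ 2 / 2)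

theorem integrable_exp_neg_sq_div_two : Integrable fun t : ℝ => exp (-t ^ 2 / 2) := by
  convert integrable_exp_neg_mul_sq (b := 1 / 2) (by norm_num) using 2 with t
  ring_nf

theorem integral_exp_neg_sq_div_two : ∫ t, exp (-t ^ 2 / 2) = √(2 * π) := by
  have h := integral_gaussian (1 / 2)
  rw [show π / (1 / 2) = 2 * π by ring] at h
  rw [← h]
  congr 1 with t
  ring_nf

theorem gaussianTail_eq_sqrt_mul_one_sub (y : ℝ) :
    gaussianTail y =
      √(2 * π) * (1 - (2 * π) ^ (-(1 / 2) : ℝ) * ∫ t in Iic y, exp (-t ^ 2 / 2)) := by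
  have hsplit := intervalIntegral.integral_Iic_add_Ioi (b := y)
    integrable_exp_neg_sq_div_two.integrableOn integrable_exp_neg_sq_div_two.integrableOn
  have hc : √(2 * π) * (2 * π) ^ (-(1 / 2) : ℝ) = 1 := by
    rw [sqrt_eq_rpow, ← rpow_add (by positivity)]
    norm_num
  rw [integral_exp_neg_sq_div_two] at hsplit
  rw [gaussianTail, mul_sub, ← mul_assoc, hc]
  linarith

theorem gaussianTail_pos (y : ℝ) : 0 < gaussianTail y := by
  rw [gaussianTail, setIntegral_pos_iff_support_of_nonneg_ae
    (.of_forall fun _ => (exp_pos _).le) integrable_exp_neg_sq_div_two.integrableOn]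
  simp [Function.support, (exp_pos _).ne']

theorem gaussianTail_antitone : Antitone gaussianTail := fun _ _ huv =>
  setIntegral_mono_set integrable_exp_neg_sq_div_two.integrableOn
    (.of_forall fun _ => (exp_pos _).le) (Ioi_subset_Ioi huv).eventuallyLE

theorem hasDerivAt_exp_neg_sq_div_two (t : ℝ) :
    HasDerivAt (fun t => exp (-t ^ 2 / 2)) (-t * exp (-t ^ 2 / 2)) t := by
  have h : HasDerivAt (fun t : ℝ => -t ^ 2 / 2) (-t) t :=
    ((hasDerivAt_pow 2 t).neg.div_const 2).congr_deriv (by push_cast; ring)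
  exact h.exp.congr_deriv (mul_comm _ _)

theorem tendsto_exp_neg_sq_div_two_atTop :
    Tendsto (fun t : ℝ => exp (-t ^ 2 / 2)) atTop (𝓝 0) :=
  tendsto_exp_atBot.comp <| by
    simpa only [neg_div, Function.comp_def] using
      tendsto_neg_atTop_atBot.comp ((tendsto_pow_atTop two_ne_zero).atTop_div_const two_pos)

section Comparison

variable {y : ℝ} {g g' : ℝ → ℝ}

theorem gaussianTail_le_of_hasDerivAt (hderiv : ∀ t ∈ Ici y, HasDerivAt g (g' t) t)
    (hg : Tendsto g atTop (𝓝 0)) (hle : ∀ t ∈ Ioi y, exp (-t ^ 2 / 2) ≤ g' t) :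
    gaussianTail y ≤ -g y := by
  have hnonneg : ∀ t ∈ Ioi y, 0 ≤ g' t := fun t ht => (exp_pos _).le.trans (hle t ht)
  calc gaussianTail y ≤ ∫ t in Ioi y, g' t :=
        setIntegral_mono_on integrable_exp_neg_sq_div_two.integrableOn
          (integrableOn_Ioi_deriv_of_nonneg' hderiv hnonneg hg) measurableSet_Ioi hle
    _ = -g y := by rw [integral_Ioi_of_hasDerivAt_of_nonneg' hderiv hnonneg hg, zero_sub]

theorem le_gaussianTail_of_hasDerivAt (hderiv : ∀ t ∈ Ici y, HasDerivAt g (g' t) t)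
    (hg : Tendsto g atTop (𝓝 0)) (hnonneg : ∀ t ∈ Ioi y, 0 ≤ g' t)
    (hle : ∀ t ∈ Ioi y, g' t ≤ exp (-t ^ 2 / 2)) : -g y ≤ gaussianTail y := by
  calc -g y = ∫ t in Ioi y, g' t := by
        rw [integral_Ioi_of_hasDerivAt_of_nonneg' hderiv hnonneg hg, zero_sub]
    _ ≤ gaussianTail y :=
        setIntegral_mono_on (integrableOn_Ioi_deriv_of_nonneg' hderiv hnonneg hg)
          integrable_exp_neg_sq_div_two.integrableOn measurableSet_Ioi hle

end Comparison

theorem gaussianTail_le {y : ℝ} (hy : 0 < y) : gaussianTail y ≤ exp (-y ^ 2 / 2) / y := by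
  have h := gaussianTail_le_of_hasDerivAt (y := y) (g := fun t => -exp (-t ^ 2 / 2) / y)
    (g' := fun t => t * exp (-t ^ 2 / 2) / y)
    (fun t _ => ((hasDerivAt_exp_neg_sq_div_two t).neg.div_const y).congr_deriv (by ring))
    (by simpa using (tendsto_exp_neg_sq_div_two_atTop.neg).div_const y)
    (fun t ht => by rw [le_div_iff₀ hy, mul_comm t]; gcongr; exact ht.le)
  rwa [neg_div, neg_neg] at h

theorem le_gaussianTail {y : ℝ} (hy : 0 < y) :
    exp (-y ^ 2 / 2) * (y / (y ^ 2 + 1)) ≤ gaussianTail y := by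
  set c := y ^ 2 / (y ^ 2 + 1)
  -- `(c e^{-t²/2} / t)' = -c e^{-t²/2} (1 + t⁻²)`, which is at most `e^{-t²/2}` in absolute
  -- value exactly when `c ≤ t² / (t² + 1)`.
  have h := le_gaussianTail_of_hasDerivAt (y := y) (g := fun t => -c * (exp (-t ^ 2 / 2) / t))
    (g' := fun t => c * (exp (-t ^ 2 / 2) * ((t ^ 2 + 1) / t ^ 2)))
    (fun t ht => by
      have ht0 : t ≠ 0 := (hy.trans_le ht).ne'
      refine (((hasDerivAt_exp_neg_sq_div_two t).div (hasDerivAt_id t) ht0).const_mul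
        (-c)).congr_deriv ?_
      simp only [id]
      field_simp
      ring)
    (by simpa [div_eq_mul_inv] using
      (tendsto_exp_neg_sq_div_two_atTop.mul tendsto_inv_atTop_zero).const_mul (-c))
    (fun t _ => by positivity)
    (fun t ht => by
      have ht0 : 0 < t := hy.trans ht
      have hle : c * ((t ^ 2 + 1) / t ^ 2) ≤ 1 := by
        rw [div_mul_div_comm, div_le_one (by positivity)]
        nlinarith [mul_lt_mul ht ht.le hy ht0.le]
      calc c * (exp (-t ^ 2 / 2) * ((t ^ 2 + 1) / t ^ 2))
          = exp (-t ^ 2 / 2) * (c * ((t ^ 2 + 1) / t ^ 2)) := by ring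
        _ ≤ exp (-t ^ 2 / 2) := mul_le_of_le_one_right (exp_pos _).le hle)
  convert h using 1
  simp only [c]
  field_simp

theorem tendsto_mul_exp_mul_gaussianTail :
    Tendsto (fun y => y * exp (y ^ 2 / 2) * gaussianTail y) atTop (𝓝 1) := by
  have hlow : Tendsto (fun y : ℝ => y ^ 2 / (y ^ 2 + 1)) atTop (𝓝 1) := by
    have h := tendsto_inv_atTop_zero.comp
      (tendsto_atTop_add_const_right _ 1 (tendsto_pow_atTop (α := ℝ) two_ne_zero))
    have h1 := (tendsto_const_nhds (x := (1 : ℝ))).sub h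
    rw [sub_zero] at h1
    refine h1.congr' ?_
    filter_upwards with y
    simp only [Function.comp]
    field_simp
    ring
  have hexp (y : ℝ) : exp (y ^ 2 / 2) * exp (-y ^ 2 / 2) = 1 := by
    rw [← exp_add]; ring_nf; exact exp_zero
  refine tendsto_of_tendsto_of_tendsto_of_le_of_le' hlow tendsto_const_nhds ?_ ?_
  all_goals filter_upwards [eventually_gt_atTop 0] with y hy
  · calc y ^ 2 / (y ^ 2 + 1) = y * exp (y ^ 2 / 2) * (exp (-y ^ 2 / 2) * (y / (y ^ 2 + 1))) := by
          rw [← mul_assoc, mul_assoc y, hexp]; ring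
      _ ≤ y * exp (y ^ 2 / 2) * gaussianTail y := by gcongr; exact le_gaussianTail hy
  · calc y * exp (y ^ 2 / 2) * gaussianTail y
          ≤ y * exp (y ^ 2 / 2) * (exp (-y ^ 2 / 2) / y) := by gcongr; exact gaussianTail_le hy
      _ = 1 := by rw [mul_div_assoc', mul_assoc, hexp]; field_simp

section Quantile

variable {q : ℝ → ℝ} {c : ℝ}

theorem tendsto_atTop_of_gaussianTail_eq (hq : ∀ᶠ s in 𝓝[>] 0, gaussianTail (q s) = c * s) :
    Tendsto q (𝓝[>] 0) atTop := by
  have hcs : Tendsto (fun s => c * s) (𝓝[>] 0) (𝓝 0) :=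
    tendsto_nhdsWithin_of_tendsto_nhds (by simpa using (continuous_const_mul c).tendsto 0)
  refine tendsto_atTop.2 fun M => ?_
  filter_upwards [hq, hcs.eventually (gt_mem_nhds (gaussianTail_pos M))] with s hs hsM
  by_contra! h
  linarith [gaussianTail_antitone h.le]

theorem tendsto_sq_div_two_add_log_sub_log_one_div (hc : 0 < c)
    (hq : ∀ᶠ s in 𝓝[>] 0, gaussianTail (q s) = c * s) :
    Tendsto (fun s => q s ^ 2 / 2 + log (q s) - log (1 / s)) (𝓝[>] 0) (𝓝 (-log c)) := by
  have hqtop := tendsto_atTop_of_gaussianTail_eq hq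
  have h := ((continuousAt_log one_ne_zero).tendsto.comp
    (tendsto_mul_exp_mul_gaussianTail.comp hqtop)).sub_const (log c)
  rw [log_one, zero_sub] at h
  refine h.congr' ?_
  filter_upwards [hq, hqtop.eventually_gt_atTop 0, self_mem_nhdsWithin] with s hs hqs (hs0 : 0 < s)
  simp only [Function.comp, hs]
  rw [log_mul (by positivity) (by positivity), log_mul hqs.ne' (exp_pos _).ne', log_exp,
    log_mul hc.ne' hs0.ne', one_div, log_inv]
  ring

end Quantile

/-- First-order Gumbel-domain condition for the standard normal quantile function. -/
theorem normal_first_order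
    (Φ : ℝ → ℝ)
    (hΦ : ∀ y : ℝ, Φ y = (2 * Real.pi) ^ (-(1/2) : ℝ) * ∫ t in Set.Iic y, Real.exp (-t ^ 2 / 2))
    (q : ℝ → ℝ)
    (hq : ∀ s ∈ Set.Ioo (0:ℝ) 1, Φ (q s) = 1 - s)
    (x : ℝ) (hx : 0 < x) :
    Tendsto (fun s => (2 * Real.log (1 / s)) ^ ((1:ℝ)/2) * (q s - q (x * s)))
      (𝓝[>] 0) (𝓝 (Real.log x)) := by
  have hG : ∀ᶠ s in 𝓝[>] 0, gaussianTail (q s) = √(2 * π) * s := by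
    filter_upwards [Ioo_mem_nhdsGT one_pos] with s hs
    rw [gaussianTail_eq_sqrt_mul_one_sub, ← hΦ, hq s hs, sub_sub_cancel]
  have hqtop := tendsto_atTop_of_gaussianTail_eq hG
  have hmul : Tendsto (x * ·) (𝓝[>] 0) (𝓝[>] 0) :=
    tendsto_comap.mono_left (comap_mulLeft_nhdsGT_zero hx).ge
  have hA := tendsto_sq_div_two_add_log_sub_log_one_div (by positivity) hG
  have hB : Tendsto (fun s => q (x * s) ^ 2 / 2 + log (q (x * s)) - log (1 / s)) (𝓝[>] 0)
      (𝓝 (-log √(2 * π) - log x)) := by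
    refine ((hA.comp hmul).sub_const (log x)).congr' ?_
    filter_upwards [self_mem_nhdsWithin] with s (hs : 0 < s)
    rw [Function.comp_apply, one_div, mul_inv, log_mul (inv_ne_zero hx.ne') (inv_ne_zero hs.ne'),
      log_inv, one_div, log_inv]
    ring
  have h := tendsto_sqrt_two_mul_mul_sub_of_tendsto_sub hqtop (hqtop.comp hmul) hA hB
  rw [sub_sub_cancel] at h
  simpa only [sqrt_eq_rpow, Function.comp_apply] using h
end
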